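/- Let C be a completely pseudo-regular code in a finite simple connected graph Γ. Then the dual degree of the k-th subconstituent satisfies d_{C_k} ≥ max{k, d_C − k}, and consequently the C-local predistance polynomial p_k vanishes at most at min{k, d_C − k} distinct eigenvalues of the C-local spectrum. -/

import Mathlib

open Finset Polynomial BigOperators
open scoped Classical

noncomputable section

/-- The eigenspace of a real matrix `A` (viewed as an operator on Euclidean space)
for the value `μ`. -/
def eigSp {n : ℕ} (A : Matrix (Fin n) (Fin n) ℝ) (μ : ℝ) :
    Submodule ℝ (EuclideanSpace ℝ (Fin n)) :=
  Module.End.eigenspace (Matrix.toEuclideanLin A) μ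

/-- Orthogonal projection onto the `μ`-eigenspace of `A`. -/
def eigProj {n : ℕ} (A : Matrix (Fin n) (Fin n) ℝ) (μ : ℝ) (v : EuclideanSpace ℝ (Fin n)) :
    EuclideanSpace ℝ (Fin n) :=
  ((eigSp A μ).orthogonalProjectionOnto v : EuclideanSpace ℝ (Fin n))

/-- The weighted characteristic vector `ρS = Σ_{i∈S} ν_i e_i`. -/
def rho {n : ℕ} (ν : EuclideanSpace ℝ (Fin n)) (S : Finset (Fin n)) :
    EuclideanSpace ℝ (Fin n) :=
  WithLp.toLp 2 (fun i => if i ∈ S then ν i else 0)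

/-- The unit vector `e_S = ρS / ‖ρS‖`. -/
def unitVec {n : ℕ} (ν : EuclideanSpace ℝ (Fin n)) (S : Finset (Fin n)) :
    EuclideanSpace ℝ (Fin n) :=
  (‖rho ν S‖)⁻¹ • rho ν S

/-- The `S`-local multiplicity of `μ`: `m_S(μ) = ‖E_μ e_S‖²`. -/
def mloc {n : ℕ} (A : Matrix (Fin n) (Fin n) ℝ) (ν : EuclideanSpace ℝ (Fin n))
    (S : Finset (Fin n)) (μ : ℝ) : ℝ :=
  ‖eigProj A μ (unitVec ν S)‖ ^ 2

/-- The `S`-local spectrum: the set of `μ` whose eigenspace sees `ρS`. -/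
def evloc {n : ℕ} (A : Matrix (Fin n) (Fin n) ℝ) (ν : EuclideanSpace ℝ (Fin n))
    (S : Finset (Fin n)) : Set ℝ :=
  {μ | eigProj A μ (rho ν S) ≠ 0}

/-- Distance from a vertex `i` to a set of vertices `S`. -/
def dSet {n : ℕ} (G : SimpleGraph (Fin n)) (S : Finset (Fin n)) (i : Fin n) : ℕ :=
  sInf {k | ∃ j ∈ S, G.dist i j = k}

/-- Eccentricity (covering radius) of a vertex set `S`. -/
def eccS {n : ℕ} (G : SimpleGraph (Fin n)) (S : Finset (Fin n)) : ℕ :=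
  Finset.univ.sup (dSet G S)

/-- The `k`-th subconstituent `S_k = {i : dist(i,S) = k}`. -/
def subcons {n : ℕ} (G : SimpleGraph (Fin n)) (S : Finset (Fin n)) (k : ℕ) :
    Finset (Fin n) :=
  Finset.univ.filter (fun i => dSet G S i = k)

/-- `p(A)·v` for a polynomial `p`, a matrix `A` and a Euclidean vector `v`. -/
def aevalVec {n : ℕ} (A : Matrix (Fin n) (Fin n) ℝ) (p : Polynomial ℝ)
    (v : EuclideanSpace ℝ (Fin n)) : EuclideanSpace ℝ (Fin n) :=
  WithLp.toLp 2 ((Polynomial.aeval A p).mulVec v)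

/-- Moment-like parameter `π_l = ∏_{h≠l} |μ_l − μ_h|` for an enumeration `μ`. -/
def piC {d : ℕ} (μ : Fin (d + 1) → ℝ) (l : Fin (d + 1)) : ℝ :=
  ∏ h ∈ Finset.univ.erase l, |μ l - μ h|

/-!
If the `S`-local spectrum has `s` elements, the monic polynomial `q = ∏ (X - μ)` over it
vanishes on every eigenvalue whose eigenspace sees `ρS`, so `q(A) ρS = 0`. If `s ≤ ε_S`, pick
a vertex `i` with `dist(i, S) = s`: the powers `A^j`, `j < s`, do not reach `S` from `i`, while
`A^s` does with positive weight, so `(q(A) ρS)_i > 0`. Hence `ε_S < |ev_S|`, and for `S = C_k`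
we have `ε_{C_k} ≥ max{k, d_C − k}`. Finally, `ρC_k = p_k(A) ρC` projects onto the
`μ`-eigenspace as `p_k(μ)` times the projection of `ρC`, so `ev_{C_k} = ev_C ∖ {zeros of p_k}`
and `p_k` has `|ev_C| − |ev_{C_k}| ≤ min{k, d_C − k}` zeros in `ev_C`.
-/

namespace LinearMap.IsSymmetric

variable {E : Type*} [NormedAddCommGroup E] [InnerProductSpace ℝ E] {T : E →ₗ[ℝ] E}

theorem aeval (hT : T.IsSymmetric) (p : ℝ[X]) : (aeval T p).IsSymmetric := by
  induction p using Polynomial.induction_on' with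
  | add p q hp hq => simpa using hp.add hq
  | monomial k a =>
    simpa [aeval_monomial, ← Algebra.smul_def] using (hT.pow k).smul (conj_trivial a)

theorem starProjection_eigenspace_aeval (hT : T.IsSymmetric) (p : ℝ[X]) (μ : ℝ) (v : E)
    [(Module.End.eigenspace T μ).HasOrthogonalProjection] :
    (Module.End.eigenspace T μ).starProjection (Polynomial.aeval T p v) =
      p.eval μ • (Module.End.eigenspace T μ).starProjection v := by
  set K := Module.End.eigenspace T μ
  refine Submodule.eq_starProjection_of_mem_of_inner_eq_zero
    (K.smul_mem _ (K.starProjection_apply_mem v)) fun w hw => ?_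
  have hpw : Polynomial.aeval T p w = p.eval μ • w :=
    Module.End.aeval_apply_of_mem_apply_eq_smul (Module.End.mem_eigenspace_iff.mp hw)
  rw [inner_sub_left, hT.aeval p, hpw, real_inner_smul_left, real_inner_smul_right,
    ← mul_sub, ← inner_sub_left, K.starProjection_inner_eq_zero v w hw, mul_zero]

variable [FiniteDimensional ℝ E]

theorem aeval_apply_eq_zero (hT : T.IsSymmetric) {q : ℝ[X]} {v : E}
    (hq : ∀ μ, (Module.End.eigenspace T μ).starProjection v ≠ 0 → q.eval μ = 0) :
    Polynomial.aeval T q v = 0 := by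
  have hmem : Polynomial.aeval T q v ∈ (⨆ μ, Module.End.eigenspace T μ)ᗮ := by
    rw [← Submodule.iInf_orthogonal, Submodule.mem_iInf]
    intro μ
    rw [← Submodule.starProjection_apply_eq_zero_iff, hT.starProjection_eigenspace_aeval]
    by_cases h : (Module.End.eigenspace T μ).starProjection v = 0
    · rw [h, smul_zero]
    · rw [hq μ h, zero_smul]
  rwa [hT.orthogonalComplement_iSup_eigenspaces_eq_bot, Submodule.mem_bot] at hmem

end LinearMap.IsSymmetric

section LocalSpectrum

variable {n : ℕ} {A : Matrix (Fin n) (Fin n) ℝ}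

theorem aevalVec_eq_aeval_toEuclideanLin (A : Matrix (Fin n) (Fin n) ℝ) (p : ℝ[X])
    (v : EuclideanSpace ℝ (Fin n)) :
    aevalVec A p v = Polynomial.aeval (Matrix.toEuclideanLin A) p v := by
  change _ = Polynomial.aeval (Matrix.toLpLinAlgEquiv 2 A) p v
  rw [Polynomial.aeval_algEquiv]
  rfl

theorem eigProj_aevalVec (hA : A.IsHermitian) (p : ℝ[X]) (μ : ℝ)
    (v : EuclideanSpace ℝ (Fin n)) :
    eigProj A μ (aevalVec A p v) = p.eval μ • eigProj A μ v := by
  rw [aevalVec_eq_aeval_toEuclideanLin]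
  exact (Matrix.isSymmetric_toEuclideanLin_iff.mpr hA).starProjection_eigenspace_aeval p μ v

theorem aevalVec_eq_zero (hA : A.IsHermitian) {q : ℝ[X]} {v : EuclideanSpace ℝ (Fin n)}
    (hq : ∀ μ, eigProj A μ v ≠ 0 → q.eval μ = 0) : aevalVec A q v = 0 := by
  rw [aevalVec_eq_aeval_toEuclideanLin]
  exact (Matrix.isSymmetric_toEuclideanLin_iff.mpr hA).aeval_apply_eq_zero hq

theorem evloc_finite (A : Matrix (Fin n) (Fin n) ℝ) (ν : EuclideanSpace ℝ (Fin n))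
    (S : Finset (Fin n)) : (evloc A ν S).Finite :=
  (Module.End.finite_hasEigenvalue _).subset fun _ hμ =>
    (Submodule.ne_bot_iff _).mpr ⟨_, Submodule.starProjection_apply_mem _ _, hμ⟩

theorem evloc_eq_diff_of_rho_eq_aevalVec (hA : A.IsHermitian) {ν : EuclideanSpace ℝ (Fin n)}
    {S T : Finset (Fin n)} {p : ℝ[X]} (h : rho ν T = aevalVec A p (rho ν S)) :
    evloc A ν T = evloc A ν S \ {x | p.eval x = 0} := by
  ext μ
  simp [evloc, h, eigProj_aevalVec hA, and_comm]

end LocalSpectrum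

section Distance

variable {n : ℕ} {G : SimpleGraph (Fin n)} {S : Finset (Fin n)}

theorem dSet_le_dist (i : Fin n) {j : Fin n} (hj : j ∈ S) : dSet G S i ≤ G.dist i j :=
  Nat.sInf_le ⟨j, hj, rfl⟩

theorem exists_mem_dist_eq_dSet (hS : S.Nonempty) (i : Fin n) :
    ∃ j ∈ S, G.dist i j = dSet G S i := by
  obtain ⟨j, hj⟩ := hS
  exact Nat.sInf_mem (s := {k | ∃ j ∈ S, G.dist i j = k}) ⟨_, j, hj, rfl⟩

theorem dSet_le_eccS (i : Fin n) : dSet G S i ≤ eccS G S :=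
  le_sup (mem_univ i)

theorem exists_dSet_eq_eccS (hS : S.Nonempty) : ∃ i, dSet G S i = eccS G S := by
  obtain ⟨i, -, hi⟩ := exists_mem_eq_sup univ (hS.mono (subset_univ S)) (dSet G S)
  exact ⟨i, hi.symm⟩

theorem dSet_le_dist_add_dSet (hconn : G.Connected) (hS : S.Nonempty) (i j : Fin n) :
    dSet G S i ≤ G.dist i j + dSet G S j := by
  obtain ⟨c, hc, hjc⟩ := exists_mem_dist_eq_dSet hS j
  calc dSet G S i ≤ G.dist i c := dSet_le_dist i hc
    _ ≤ G.dist i j + G.dist j c := hconn.dist_triangle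
    _ = G.dist i j + dSet G S j := by rw [hjc]

/-- The vertex `t` steps along a shortest path from `i` to `S` lies at distance
`dSet G S i - t` from `S`. -/
theorem exists_dSet_eq_of_le_dSet (hconn : G.Connected) (hS : S.Nonempty) {i : Fin n} {k : ℕ}
    (hk : k ≤ dSet G S i) : ∃ j, dSet G S j = k := by
  obtain ⟨c, hc, hic⟩ := exists_mem_dist_eq_dSet (G := G) hS i
  obtain ⟨w, hw⟩ := hconn.exists_walk_length_eq_dist i c
  set t := dSet G S i - k
  refine ⟨w.getVert t, le_antisymm ?_ ?_⟩
  · calc dSet G S (w.getVert t) ≤ G.dist (w.getVert t) c := dSet_le_dist _ hc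
      _ ≤ (w.drop t).length := SimpleGraph.dist_le _
      _ = k := by rw [w.drop_length]; omega
  · have hfar := dSet_le_dist_add_dSet hconn hS i (w.getVert t)
    have hnear : G.dist i (w.getVert t) ≤ (w.take t).length := SimpleGraph.dist_le _
    rw [w.take_length] at hnear
    omega

theorem exists_dSet_eq (hconn : G.Connected) (hS : S.Nonempty) {k : ℕ} (hk : k ≤ eccS G S) :
    ∃ i, dSet G S i = k := by
  obtain ⟨i, hi⟩ := exists_dSet_eq_eccS (G := G) hS
  exact exists_dSet_eq_of_le_dSet hconn hS (hi ▸ hk)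

theorem subcons_nonempty (hconn : G.Connected) (hS : S.Nonempty) {k : ℕ} (hk : k ≤ eccS G S) :
    (subcons G S k).Nonempty := by
  obtain ⟨i, hi⟩ := exists_dSet_eq hconn hS hk
  exact ⟨i, mem_filter.mpr ⟨mem_univ i, hi⟩⟩

theorem le_eccS_subcons (hconn : G.Connected) (hS : S.Nonempty) {k : ℕ} (hk : k ≤ eccS G S) :
    k ≤ eccS G (subcons G S k) := by
  obtain ⟨c, hc⟩ := hS
  obtain ⟨j, hj, hcj⟩ :=
    exists_mem_dist_eq_dSet (G := G) (subcons_nonempty hconn ⟨c, hc⟩ hk) c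
  calc k = dSet G S j := (mem_filter.mp hj).2.symm
    _ ≤ G.dist j c := dSet_le_dist j hc
    _ = dSet G (subcons G S k) c := by rw [SimpleGraph.dist_comm, hcj]
    _ ≤ eccS G (subcons G S k) := dSet_le_eccS c

theorem eccS_sub_le_eccS_subcons (hconn : G.Connected) (hS : S.Nonempty) {k : ℕ}
    (hk : k ≤ eccS G S) : eccS G S - k ≤ eccS G (subcons G S k) := by
  obtain ⟨v, hv⟩ := exists_dSet_eq_eccS (G := G) hS
  obtain ⟨j, hj, hvj⟩ := exists_mem_dist_eq_dSet (G := G) (subcons_nonempty hconn hS hk) v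
  have hjk : dSet G S j = k := (mem_filter.mp hj).2
  have htri := dSet_le_dist_add_dSet hconn hS v j
  have hecc := dSet_le_eccS (G := G) (S := subcons G S k) v
  omega

end Distance

namespace SimpleGraph

variable {V α : Type*} [Fintype V] [DecidableEq V] {G : SimpleGraph V} [DecidableRel G.Adj]

theorem adjMatrix_pow_apply_eq_zero_of_lt_dist [Semiring α] {j : ℕ} {u v : V}
    (h : j < G.dist u v) : (G.adjMatrix α ^ j) u v = 0 := by
  rw [adjMatrix_pow_apply_eq_card_walk, Fintype.card_eq_zero_iff.mpr, Nat.cast_zero]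
  exact ⟨fun ⟨w, hw⟩ => (hw ▸ dist_le w).not_gt h⟩

theorem Reachable.adjMatrix_pow_dist_apply_pos [Semiring α] [PartialOrder α]
    [IsStrictOrderedRing α] {u v : V} (h : G.Reachable u v) :
    0 < (G.adjMatrix α ^ G.dist u v) u v := by
  obtain ⟨w, hw⟩ := h.exists_walk_length_eq_dist
  rw [adjMatrix_pow_apply_eq_card_walk, Nat.cast_pos]
  exact Fintype.card_pos_iff.mpr ⟨⟨w, hw⟩⟩

end SimpleGraph

section Positivity

open scoped Matrix

variable {n : ℕ} {G : SimpleGraph (Fin n)} [DecidableRel G.Adj] {ν : EuclideanSpace ℝ (Fin n)}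
  {S : Finset (Fin n)}

theorem pow_mulVec_rho_apply_eq_zero {j : ℕ} {i : Fin n} (hj : j < dSet G S i) :
    (G.adjMatrix ℝ ^ j *ᵥ rho ν S) i = 0 := by
  rw [Matrix.mulVec, dotProduct]
  refine sum_eq_zero fun l _ => ?_
  by_cases hl : l ∈ S
  · rw [SimpleGraph.adjMatrix_pow_apply_eq_zero_of_lt_dist
      (hj.trans_le (dSet_le_dist i hl)), zero_mul]
  · simp [rho, hl]

theorem pow_dSet_mulVec_rho_apply_pos (hconn : G.Connected) (hν : ∀ i, 0 < ν i)
    (hS : S.Nonempty) (i : Fin n) : 0 < (G.adjMatrix ℝ ^ dSet G S i *ᵥ rho ν S) i := by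
  obtain ⟨c, hc, hic⟩ := exists_mem_dist_eq_dSet (G := G) hS i
  rw [Matrix.mulVec, dotProduct]
  refine sum_pos' (fun l _ => mul_nonneg ?_ ?_) ⟨c, mem_univ c, mul_pos ?_ ?_⟩
  · rw [SimpleGraph.adjMatrix_pow_apply_eq_card_walk]; positivity
  · by_cases hl : l ∈ S <;> simp [rho, hl, (hν l).le]
  · exact hic ▸ (hconn i c).adjMatrix_pow_dist_apply_pos
  · simpa [rho, hc] using hν c

theorem aevalVec_rho_apply_pos (hconn : G.Connected) (hν : ∀ i, 0 < ν i) (hS : S.Nonempty)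
    {i : Fin n} {q : ℝ[X]} (hq : q.Monic) (hdeg : q.natDegree = dSet G S i) :
    0 < aevalVec (G.adjMatrix ℝ) q (rho ν S) i := by
  have hexpand : aevalVec (G.adjMatrix ℝ) q (rho ν S) i =
      ∑ j ∈ range (q.natDegree + 1), q.coeff j * (G.adjMatrix ℝ ^ j *ᵥ rho ν S) i := by
    simp [aevalVec, aeval_eq_sum_range, Matrix.sum_mulVec, Matrix.smul_mulVec]
  rw [hexpand, sum_range_succ, sum_eq_zero fun j hj => by
    rw [pow_mulVec_rho_apply_eq_zero (hdeg ▸ mem_range.mp hj), mul_zero],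
    hq.coeff_natDegree, hdeg, zero_add, one_mul]
  exact pow_dSet_mulVec_rho_apply_pos hconn hν hS i

theorem eccS_lt_ncard_evloc (hconn : G.Connected) (hν : ∀ i, 0 < ν i) (hS : S.Nonempty) :
    eccS G S < (evloc (G.adjMatrix ℝ) ν S).ncard := by
  have hfin := evloc_finite (G.adjMatrix ℝ) ν S
  by_contra! hle
  obtain ⟨i, hi⟩ := exists_dSet_eq hconn hS hle
  set q : ℝ[X] := ∏ μ ∈ hfin.toFinset, (X - C μ)
  have hdeg : q.natDegree = dSet G S i := by
    rw [natDegree_finsetProd_X_sub_C_eq_card, hi, Set.ncard_eq_toFinset_card _ hfin]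
  have hpos := aevalVec_rho_apply_pos hconn hν hS
    (monic_prod_of_monic _ _ fun μ _ => monic_X_sub_C μ) hdeg
  have hroots (μ : ℝ) (hμ : μ ∈ evloc (G.adjMatrix ℝ) ν S) : q.eval μ = 0 := by
    rw [eval_prod]
    exact prod_eq_zero (hfin.mem_toFinset.mpr hμ) (by simp)
  rw [aevalVec_eq_zero (G.isHermitian_adjMatrix ℝ) hroots] at hpos
  exact hpos.false

end Positivity

theorem subconstituent_dual_degree_bound_general {n : ℕ} (G : SimpleGraph (Fin n)) [DecidableRel G.Adj]
    (hconn : G.Connected)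
    (ν : EuclideanSpace ℝ (Fin n)) (hν : ∀ i, 0 < ν i)
    (C : Finset (Fin n)) (hC : C.Nonempty)
    (d : ℕ) (hd : d + 1 = (evloc (G.adjMatrix ℝ) ν C).ncard)
    (p : ℕ → Polynomial ℝ)
    (hcode : ∀ k ≤ eccS G C, rho ν (subcons G C k) = aevalVec (G.adjMatrix ℝ) (p k) (rho ν C))
    (hext : eccS G C = d) :
    ∀ k ≤ eccS G C,
      max k (d - k) + 1 ≤ (evloc (G.adjMatrix ℝ) ν (subcons G C k)).ncard ∧
      ((evloc (G.adjMatrix ℝ) ν C) ∩ {x : ℝ | (p k).eval x = 0}).ncard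
        ≤ min k (d - k) := by
  intro k hk
  have hecc : max k (d - k) ≤ eccS G (subcons G C k) :=
    max_le (le_eccS_subcons hconn hC hk) (hext ▸ eccS_sub_le_eccS_subcons hconn hC hk)
  have hdual := eccS_lt_ncard_evloc hconn hν (subcons_nonempty hconn hC hk)
  have hsplit := Set.ncard_inter_add_ncard_sdiff_eq_ncard (evloc (G.adjMatrix ℝ) ν C)
    {x : ℝ | (p k).eval x = 0} (evloc_finite _ ν C)
  rw [← evloc_eq_diff_of_rho_eq_aevalVec
    (G.isHermitian_adjMatrix ℝ) (hcode k hk)] at hsplit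
  omega

theorem subconstituent_dual_degree_bound {n : ℕ} (hn : 0 < n) (G : SimpleGraph (Fin n)) [DecidableRel G.Adj]
    (hconn : G.Connected)
    (ν : EuclideanSpace ℝ (Fin n)) (hν : ∀ i, 0 < ν i) (lam0 : ℝ)
    (hPerron : (G.adjMatrix ℝ).mulVec ν = lam0 • ν)
    (C : Finset (Fin n)) (hC : C.Nonempty)
    (d : ℕ) (hd : d + 1 = (evloc (G.adjMatrix ℝ) ν C).ncard)
    (p : ℕ → Polynomial ℝ)
    (hdeg : ∀ k ≤ d, (p k).natDegree = k)
    (horth : ∀ k ≤ d, ∀ h ≤ d, k ≠ h →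
      (inner ℝ (aevalVec (G.adjMatrix ℝ) (p k) (unitVec ν C))
             (aevalVec (G.adjMatrix ℝ) (p h) (unitVec ν C)) : ℝ) = 0)
    (hnorm : ∀ k ≤ d,
      (inner ℝ (aevalVec (G.adjMatrix ℝ) (p k) (unitVec ν C))
             (aevalVec (G.adjMatrix ℝ) (p k) (unitVec ν C)) : ℝ) = (p k).eval lam0)
    (hcode : ∀ k ≤ eccS G C, rho ν (subcons G C k) = aevalVec (G.adjMatrix ℝ) (p k) (rho ν C))
    (hext : eccS G C = d) :
    ∀ k ≤ eccS G C,
      max k (d - k) + 1 ≤ (evloc (G.adjMatrix ℝ) ν (subcons G C k)).ncard ∧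
      ((evloc (G.adjMatrix ℝ) ν C) ∩ {x : ℝ | (p k).eval x = 0}).ncard
        ≤ min k (d - k) :=
  subconstituent_dual_degree_bound_general G hconn ν hν C hC d hd p hcode hext
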